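/- arXiv:2601.08638 — 5 statements merged into one kernel-verified Lean document; each statement's English description precedes it below -/
import Mathlib

section
/- Let V be a vector space over ℂ and let Δ ⊆ V ∖ {0}. Suppose Σ' and Σ'' are root bases for Δ, let α ∈ Δ⁺(Σ'), and assume Δ⁺(Σ') ∖ {nα : n ∈ ℤ, n ≥ 1} = Δ⁺(Σ'') ∖ {−nα : n ∈ ℤ, n ≥ 1}. Then α ∈ Σ' and −α ∈ Σ''. -/
/-- The set of nonzero linear combinations of elements of `S` with nonnegative
integer coefficients (denoted `ℕΣ` in the paper). -/
def nnSpan {V : Type*} [AddCommGroup V] [Module ℂ V] (S : Finset V) : Set V :=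
  {x | x ≠ 0 ∧ ∃ c : V → ℕ, x = ∑ v ∈ S, (c v : ℂ) • v}

/-- The positive roots with respect to a base: `Δ⁺(Σ) = Δ ∩ ℕΣ`. -/
def posRoots {V : Type*} [AddCommGroup V] [Module ℂ V] (Δ : Set V) (S : Finset V) : Set V :=
  Δ ∩ nnSpan S

/-- `S` is a root base for `Δ`: it is a finite linearly independent subset of `Δ`
such that `Δ` is the disjoint union of `Δ⁺(S)` and `-Δ⁺(S)`. -/
def IsRootBase {V : Type*} [AddCommGroup V] [Module ℂ V] (Δ : Set V) (S : Finset V) : Prop :=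
  (S : Set V) ⊆ Δ ∧
  LinearIndependent ℂ (fun v : (S : Set V) => (v : V)) ∧
  Δ = posRoots Δ S ∪ (-(posRoots Δ S)) ∧
  Disjoint (posRoots Δ S) (-(posRoots Δ S))

/-! If no element of `Σ'` were a positive multiple of `α`, the hypothesis would put `Σ'`, hence all
of its `ℕ`-combinations `Δ⁺(Σ')`, inside `Δ⁺(Σ'')`; this is impossible because `α ∈ Δ⁺(Σ')` while
`-α ∈ Δ⁺(Σ'')`. So some element of `Σ'` is `n • α` with `n ≥ 1`, and comparing coefficients in the
basis `Σ'` forces `n = 1`. Exchanging the roles of `Σ'`, `α` and `Σ''`, `-α` gives `-α ∈ Σ''`. -/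

section RootBase

variable {V : Type*} [AddCommGroup V] [Module ℂ V] {Δ : Set V} {S T : Finset V} {x β : V}

lemma mem_nnSpan_iff : x ∈ nnSpan S ↔ x ≠ 0 ∧ x ∈ AddSubmonoid.closure (S : Set V) := by
  simp only [nnSpan, Set.mem_ofPred_eq, Nat.cast_smul_eq_nsmul]
  refine and_congr_right fun _ => ⟨?_, fun hx => ?_⟩
  · rintro ⟨c, rfl⟩
    exact AddSubmonoid.sum_mem _ fun v hv => nsmul_mem (AddSubmonoid.subset_closure hv) _
  · obtain ⟨c, -, rfl⟩ := AddSubmonoid.mem_closure_finset.mp hx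
    exact ⟨c, rfl⟩

lemma nnSpan_subset_nnSpan (h : (S : Set V) ⊆ nnSpan T) : nnSpan S ⊆ nnSpan T := by
  have hcl : AddSubmonoid.closure (S : Set V) ≤ AddSubmonoid.closure (T : Set V) :=
    AddSubmonoid.closure_le.mpr fun v hv => (mem_nnSpan_iff.mp (h hv)).2
  intro x hx
  obtain ⟨hx0, hxS⟩ := mem_nnSpan_iff.mp hx
  exact mem_nnSpan_iff.mpr ⟨hx0, hcl hxS⟩

lemma neg_zsmul_ne_self (hx : x ≠ 0) {n : ℤ} (hn : 0 ≤ n) : -(n • x) ≠ x := by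
  intro h
  have hzero : ((n + 1 : ℤ) : ℂ) • x = 0 := by
    rw [Int.cast_smul_eq_zsmul, add_zsmul, one_zsmul]
    nth_rw 2 [← h]
    exact add_neg_cancel _
  exact hx ((smul_eq_zero.mp hzero).resolve_left (by exact_mod_cast (by omega : n + 1 ≠ 0)))

lemma eq_of_mem_of_eq_zsmul (hind : LinearIndependent ℂ (fun v : (S : Set V) => (v : V)))
    {v : V} (hv : v ∈ S) (hβ : β ∈ nnSpan S) {n : ℤ} (hn : 1 ≤ n) (h : v = n • β) : v = β := by
  classical
  obtain ⟨-, c, rfl⟩ := hβ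
  have hsum : ∑ w ∈ S, (if w = v then 1 else 0 : ℂ) • w = ∑ w ∈ S, ((n : ℂ) * c w) • w := by
    simp_rw [ite_smul, one_smul, zero_smul, Finset.sum_ite_eq', if_pos hv, mul_smul,
      ← Finset.smul_sum, Int.cast_smul_eq_zsmul, ← h]
  have hcoeff := (linearIndepOn_finset_iffₛ (v := id)).mp hind _ _ hsum v hv
  rw [if_pos rfl] at hcoeff
  have hn1 : n = 1 := Int.eq_one_of_mul_eq_one_right (by omega) (by exact_mod_cast hcoeff.symm)
  rw [h, hn1, one_smul]

namespace IsRootBase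

lemma neg_mem (hS : IsRootBase Δ S) (hx : x ∈ Δ) : -x ∈ Δ := by
  rw [hS.2.2.1] at hx ⊢
  rcases hx with hx | hx
  · exact Or.inr (Set.neg_mem_neg.mpr hx)
  · exact Or.inl hx

lemma mem_posRoots (hS : IsRootBase Δ S) {v : V} (hv : v ∈ S) : v ∈ posRoots Δ S :=
  ⟨hS.1 hv, mem_nnSpan_iff.mpr ⟨hS.2.1.ne_zero ⟨v, hv⟩, AddSubmonoid.subset_closure hv⟩⟩

lemma neg_notMem_posRoots (hS : IsRootBase Δ S) (hx : x ∈ posRoots Δ S) :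
    -x ∉ posRoots Δ S := fun hneg =>
  Set.disjoint_left.mp hS.2.2.2 hx (Set.mem_neg.mpr hneg)

lemma mem_of_posRoots_diff_subset (hS : IsRootBase Δ S) (hT : IsRootBase Δ T)
    (hβ : β ∈ posRoots Δ S) (hβT : -β ∈ posRoots Δ T)
    (h : posRoots Δ S \ {x | ∃ n : ℤ, 1 ≤ n ∧ x = n • β} ⊆ posRoots Δ T) : β ∈ S := by
  by_cases hmul : ∃ v ∈ S, ∃ n : ℤ, 1 ≤ n ∧ v = n • β
  · obtain ⟨v, hv, n, hn, hvβ⟩ := hmul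
    exact eq_of_mem_of_eq_zsmul hS.2.1 hv hβ.2 hn hvβ ▸ hv
  · push Not at hmul
    have hST : (S : Set V) ⊆ posRoots Δ T := fun v hv =>
      h ⟨hS.mem_posRoots hv, fun ⟨n, hn, hvβ⟩ => hmul v hv n hn hvβ⟩
    have hβT' : β ∈ posRoots Δ T :=
      ⟨hβ.1, nnSpan_subset_nnSpan (fun v hv => (hST hv).2) hβ.2⟩
    exact absurd hβT (hT.neg_notMem_posRoots hβT')

end IsRootBase

end RootBase

theorem reflexion_property_i_general
    {V : Type*} [AddCommGroup V] [Module ℂ V]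
    (Δ : Set V)
    (B1 B2 : Finset V)
    (hB1 : IsRootBase Δ B1) (hB2 : IsRootBase Δ B2)
    (α : V) (hα : α ∈ posRoots Δ B1)
    (hrefl : posRoots Δ B1 \ {x | ∃ n : ℤ, 1 ≤ n ∧ x = n • α}
           = posRoots Δ B2 \ {x | ∃ n : ℤ, 1 ≤ n ∧ x = -(n • α)}) :
    α ∈ B1 ∧ -α ∈ B2 := by
  have hnegα : -α ∈ posRoots Δ B2 := by
    rcases (hB2.2.2.1 ▸ hB1.neg_mem hα.1 : -α ∈ posRoots Δ B2 ∪ -posRoots Δ B2) with h | h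
    · exact h
    -- otherwise `α` survives on the right of `hrefl` but is removed on the left
    · have hα2 : α ∈ posRoots Δ B2 \ {x | ∃ n : ℤ, 1 ≤ n ∧ x = -(n • α)} :=
        ⟨by simpa using h, fun ⟨n, hn, hαn⟩ => neg_zsmul_ne_self hα.2.1 (by omega) hαn.symm⟩
      exact absurd ⟨1, le_rfl, (one_zsmul α).symm⟩ (hrefl ▸ hα2).2
  have hneg_mul : {x | ∃ n : ℤ, 1 ≤ n ∧ x = -(n • α)} = {x | ∃ n : ℤ, 1 ≤ n ∧ x = n • -α} := by
    simp_rw [smul_neg]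
  refine ⟨hB1.mem_of_posRoots_diff_subset hB2 hα hnegα
    (hrefl.subset.trans Set.sdiff_subset),
    hB2.mem_of_posRoots_diff_subset hB1 hnegα (by rwa [neg_neg]) ?_⟩
  rw [← hneg_mul, ← hrefl]
  exact Set.sdiff_subset

theorem reflexion_property_i
    {V : Type*} [AddCommGroup V] [Module ℂ V]
    (Δ : Set V) (hΔ : (0 : V) ∉ Δ)
    (B1 B2 : Finset V)
    (hB1 : IsRootBase Δ B1) (hB2 : IsRootBase Δ B2)
    (α : V) (hα : α ∈ posRoots Δ B1)
    (hrefl : posRoots Δ B1 \ {x | ∃ n : ℤ, 1 ≤ n ∧ x = n • α}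
           = posRoots Δ B2 \ {x | ∃ n : ℤ, 1 ≤ n ∧ x = -(n • α)}) :
    α ∈ B1 ∧ -α ∈ B2 :=
  reflexion_property_i_general Δ B1 B2 hB1 hB2 α hα hrefl
end

section
/- Let A be an n×n generalized Cartan matrix. If λ ∈ ℝⁿ satisfies (Aλ)ᵢ ≤ 0 for every i = 1,…,n, then for every w ∈ W one has w(λ) − λ ∈ C, i.e. every coordinate of w(λ) − λ is nonnegative. -/
/-- `A` is a generalized Cartan matrix. -/
def IsGCM {n : ℕ} (A : Matrix (Fin n) (Fin n) ℝ) : Prop :=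
  (∀ i, A i i = 2) ∧
  (∀ i j, i ≠ j → A i j ≤ 0 ∧ ∃ m : ℤ, A i j = (m : ℝ)) ∧
  (∀ i j, A i j = 0 → A j i = 0)

/-- The simple reflection `sᵢ(v) = v − (Av)ᵢ eᵢ`, as an endomorphism of `ℝⁿ`. -/
def simpleRefl {n : ℕ} (A : Matrix (Fin n) (Fin n) ℝ) (i : Fin n) :
    Function.End (Fin n → ℝ) :=
  fun v : Fin n → ℝ => v - A.mulVec v i • (Pi.single i (1 : ℝ) : Fin n → ℝ)

/-- The Weyl group in simple-root coordinates: the collection of all compositions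
of simple reflections (each `sᵢ` is an involution, so this monoid of maps is the
group generated by the `sᵢ`). -/
def weylGroup {n : ℕ} (A : Matrix (Fin n) (Fin n) ℝ) :
    Submonoid (Function.End (Fin n → ℝ)) :=
  Submonoid.closure (Set.range (simpleRefl A))

/-- The nonnegative orthant `C = {v : v ≥ 0}`. -/
def posOrthant (n : ℕ) : Set (Fin n → ℝ) := {v | ∀ i, 0 ≤ v i}

/-- The positive cone `Q = ⋂_{w ∈ W} w(C)`. -/
def posCone {n : ℕ} (A : Matrix (Fin n) (Fin n) ℝ) : Set (Fin n → ℝ) :=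
  ⋂ w ∈ weylGroup A, w '' posOrthant n


/-!
Write a shortest expression of `w` as `w' sₘ`. Then `w λ - λ = (w' λ - λ) - (Aλ)ₘ · w'(αₘ)`, so by
induction it suffices that `w'(αₘ) ≥ 0` whenever `w' sₘ` is not shorter than `w'`. This positivity
is proved by induction on the length of `w'`, splitting off from `w'` a longest possible tail in
the dihedral subgroup `⟨sᵢ, sⱼ⟩`, where `sⱼ` is the last letter of a shortest expression of `w'`
(Bourbaki, Humphreys §5.4). In rank two it is a computation: a shortest word of `⟨sᵢ, sⱼ⟩` that
does not end in `sᵢ` alternates, and along alternating words the coordinates of the image of `αᵢ`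
stay nonnegative, forever if `aᵢⱼ aⱼᵢ ≥ 4` and otherwise up to the braid relation of length
2, 3, 4 or 6, which the integrality of `A` makes available.
-/

open Set

namespace GCM

variable {n : ℕ} {A : Matrix (Fin n) (Fin n) ℝ} {i j : Fin n}

lemma simpleRefl_apply (i : Fin n) (v : Fin n → ℝ) :
    simpleRefl A i v = v - A.mulVec v i • Pi.single i 1 := rfl

lemma mulVec_simpleRefl (i k : Fin n) (v : Fin n → ℝ) :
    A.mulVec (simpleRefl A i v) k = A.mulVec v k - A.mulVec v i * A k i := by
  simp [simpleRefl, Matrix.mulVec_sub, Matrix.mulVec_smul, Matrix.mulVec_single]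

lemma simpleRefl_add (i : Fin n) (u v : Fin n → ℝ) :
    simpleRefl A i (u + v) = simpleRefl A i u + simpleRefl A i v := by
  simp only [simpleRefl, Matrix.mulVec_add, Pi.add_apply, add_smul]
  abel

lemma simpleRefl_smul (i : Fin n) (c : ℝ) (v : Fin n → ℝ) :
    simpleRefl A i (c • v) = c • simpleRefl A i v := by
  simp only [simpleRefl, Matrix.mulVec_smul, Pi.smul_apply, smul_eq_mul, smul_sub, mul_smul]

lemma simpleRefl_single (i k : Fin n) :
    simpleRefl A i (Pi.single k 1) = Pi.single k 1 - A i k • Pi.single i 1 := by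
  simp [simpleRefl, Matrix.mulVec_single]

lemma simpleRefl_mul_self (h : A i i = 2) : simpleRefl A i * simpleRefl A i = 1 := by
  funext v
  change simpleRefl A i (simpleRefl A i v) = v
  rw [simpleRefl_apply, mulVec_simpleRefl, h, simpleRefl_apply]
  module

variable (A) in
def word (l : List (Fin n)) : Function.End (Fin n → ℝ) := (l.map (simpleRefl A)).prod

@[simp] lemma word_nil : word A [] = 1 := rfl

lemma word_nil_apply (v : Fin n → ℝ) : word A [] v = v := rfl

@[simp] lemma word_cons (i : Fin n) (l : List (Fin n)) :
    word A (i :: l) = simpleRefl A i * word A l := by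
  simp [word]

lemma word_cons_apply (i : Fin n) (l : List (Fin n)) (v : Fin n → ℝ) :
    word A (i :: l) v = simpleRefl A i (word A l v) := by
  rw [word_cons]; rfl

@[simp] lemma word_append (l₁ l₂ : List (Fin n)) :
    word A (l₁ ++ l₂) = word A l₁ * word A l₂ := by
  simp [word]

lemma word_singleton (i : Fin n) : word A [i] = simpleRefl A i := by simp [word]

lemma word_add (l : List (Fin n)) (u v : Fin n → ℝ) :
    word A l (u + v) = word A l u + word A l v := by
  induction l with
  | nil => rfl
  | cons i l ih => simp [word_cons_apply, ih, simpleRefl_add]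

lemma word_smul (l : List (Fin n)) (c : ℝ) (v : Fin n → ℝ) :
    word A l (c • v) = c • word A l v := by
  induction l with
  | nil => rfl
  | cons i l ih => simp [word_cons_apply, ih, simpleRefl_smul]

lemma exists_word_eq {w : Function.End (Fin n → ℝ)} (hw : w ∈ weylGroup A) :
    ∃ l, word A l = w := by
  rw [weylGroup, ← FreeMonoid.mrange_lift] at hw
  obtain ⟨l, rfl⟩ := hw
  exact ⟨l.toList, (FreeMonoid.lift_apply _ _).symm⟩

/-- `LengthAtLeast A S l.length (word A l)` says that `l` is a reduced word over the letters `S`. -/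
def LengthAtLeast (A : Matrix (Fin n) (Fin n) ℝ) (S : Set (Fin n)) (m : ℕ)
    (g : Function.End (Fin n → ℝ)) : Prop :=
  ∀ l : List (Fin n), (∀ t ∈ l, t ∈ S) → word A l = g → m ≤ l.length

lemma exists_shortest_word {w : Function.End (Fin n → ℝ)} (hw : ∃ l, word A l = w) :
    ∃ l, word A l = w ∧ LengthAtLeast A univ l.length w := by
  classical
  have h : ∃ m, ∃ l : List (Fin n), l.length = m ∧ word A l = w :=
    let ⟨l, hl⟩ := hw; ⟨_, l, rfl, hl⟩
  obtain ⟨l, hlen, hl⟩ := Nat.find_spec h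
  exact ⟨l, hl, fun l' _ hl' => hlen ▸ Nat.find_min' h ⟨l', rfl, hl'⟩⟩

lemma LengthAtLeast.of_append_singleton {S : Set (Fin n)} {l : List (Fin n)} {t : Fin n}
    (ht : t ∈ S) (h : LengthAtLeast A S (l ++ [t]).length (word A (l ++ [t]))) :
    LengthAtLeast A S l.length (word A l) := fun l' hl' hw => by
  have := h (l' ++ [t]) (by simpa [or_imp, forall_and] using ⟨hl', ht⟩) (by simp [hw])
  simpa using this

lemma LengthAtLeast.mul_simpleRefl_of_append {S : Set (Fin n)} {l : List (Fin n)} {t : Fin n}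
    (h : LengthAtLeast A S (l ++ [t]).length (word A (l ++ [t]))) :
    LengthAtLeast A S l.length (word A l * simpleRefl A t) := fun l' hl' hw => by
  have := h l' hl' (by simp [hw])
  rw [List.length_append, List.length_singleton] at this
  omega

/-- The alternating word `⋯ i j i j` of length `m`, ending with `j`. -/
def altWord {α : Type*} (i j : α) : ℕ → List α
  | 0 => []
  | m + 1 => (if Even m then j else i) :: altWord i j m

section altWord

variable {α : Type*} (i j : α)

@[simp] lemma length_altWord (m : ℕ) : (altWord i j m).length = m := by
  induction m with
  | zero => rfl
  | succ m ih => simp [altWord, ih]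

lemma altWord_succ (m : ℕ) : altWord j i (m + 1) = altWord i j m ++ [i] := by
  induction m with
  | zero => simp [altWord]
  | succ m ih =>
    rw [altWord, ih, altWord]
    by_cases hm : Even m <;> simp [hm, Nat.even_add_one]

lemma mem_altWord {i j t : α} {m : ℕ} (ht : t ∈ altWord i j m) : t = i ∨ t = j := by
  induction m with
  | zero => simp [altWord] at ht
  | succ m ih =>
    rw [altWord, List.mem_cons] at ht
    rcases ht with rfl | ht
    · split_ifs <;> simp
    · exact ih ht

lemma exists_altWord_eq_append (k m : ℕ) : ∃ z, altWord i j (k + m) = z ++ altWord i j m := by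
  induction k with
  | zero => exact ⟨[], by simp⟩
  | succ k ih =>
    obtain ⟨z, hz⟩ := ih
    exact ⟨_ :: z, by rw [Nat.succ_add, altWord, hz, List.cons_append]⟩

end altWord

/-- `word A (altWord i j m) αᵢ = p αᵢ + q (-aⱼᵢ) αⱼ` for `(p, q) = rank2Coeff (aᵢⱼ aⱼᵢ) m`
(`word_altWord_apply_single`). -/
def rank2Coeff (N : ℤ) : ℕ → ℤ × ℤ
  | 0 => (1, 0)
  | m + 1 =>
    let c := rank2Coeff N m
    if Even m then (c.1, c.1 - c.2) else (N * c.2 - c.1, c.2)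

/-- The order of `sᵢ sⱼ` when `aᵢⱼ aⱼᵢ = N ∈ {0, 1, 2, 3}`. -/
def braidLength : ℤ → ℕ
  | 0 => 2
  | 1 => 3
  | 2 => 4
  | _ => 6

lemma one_le_braidLength (N : ℤ) : 1 ≤ braidLength N := by
  unfold braidLength
  split <;> norm_num

lemma rank2Coeff_nonneg_of_lt_braidLength {N : ℤ} (h0 : 0 ≤ N) (h4 : N < 4) {m : ℕ}
    (hm : m < braidLength N) : 0 ≤ (rank2Coeff N m).1 ∧ 0 ≤ (rank2Coeff N m).2 := by
  interval_cases N <;> revert m <;> decide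

lemma rank2Coeff_nonneg_of_four_le {N : ℤ} (h4 : 4 ≤ N) (m : ℕ) :
    0 ≤ (rank2Coeff N m).1 ∧ 0 ≤ (rank2Coeff N m).2 := by
  -- at even indices `0 ≤ 2 q ≤ p`, which one double step preserves
  have heven : ∀ r, 0 ≤ 2 * (rank2Coeff N (2 * r)).2 ∧
      2 * (rank2Coeff N (2 * r)).2 ≤ (rank2Coeff N (2 * r)).1 := by
    intro r
    induction r with
    | zero => simp [rank2Coeff]
    | succ r ih =>
      rw [show 2 * (r + 1) = 2 * r + 1 + 1 by ring]
      simp only [rank2Coeff, Nat.even_add_one, even_two_mul, not_true, if_false, if_true]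
      obtain ⟨h1, h2⟩ := ih
      constructor <;> nlinarith
  obtain ⟨r, rfl | rfl⟩ := Nat.even_or_odd' m
  · obtain ⟨h1, h2⟩ := heven r
    constructor <;> linarith
  · obtain ⟨h1, h2⟩ := heven r
    simp only [rank2Coeff, even_two_mul, if_true]
    constructor <;> linarith

lemma word_altWord_apply_single (hdiag : ∀ k, A k k = 2) {N : ℤ} (hN : A i j * A j i = N)
    (m : ℕ) :
    word A (altWord i j m) (Pi.single i 1) =
      ((rank2Coeff N m).1 : ℝ) • Pi.single i 1 + (-A j i * (rank2Coeff N m).2) • Pi.single j 1 := by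
  induction m with
  | zero => simp [altWord, rank2Coeff, word_nil_apply]
  | succ m ih =>
    rw [altWord, word_cons_apply, ih, rank2Coeff]
    split_ifs
    · simp only [simpleRefl_add, simpleRefl_smul, simpleRefl_single, hdiag]
      push_cast
      module
    · simp only [simpleRefl_add, simpleRefl_smul, simpleRefl_single, hdiag]
      push_cast
      rw [← hN]
      module

lemma word_braid_A1A1 (hij : A i j = 0) (hji : A j i = 0) : word A [i, j] = word A [j, i] := by
  funext v
  simp only [word_cons_apply, word_nil_apply, simpleRefl_apply]
  simp only [Matrix.mulVec_sub, Matrix.mulVec_smul, Pi.sub_apply, Pi.smul_apply,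
    Matrix.mulVec_single_one, smul_eq_mul, Matrix.col_apply, hij, hji]
  module

lemma word_braid_A2 (hdiag : ∀ k, A k k = 2) (hN : A i j * A j i = 1) :
    word A [j, i, j] = word A [i, j, i] := by
  funext v
  simp only [word_cons_apply, word_nil_apply, simpleRefl_apply]
  simp only [Matrix.mulVec_sub, Matrix.mulVec_smul, Pi.sub_apply, Pi.smul_apply,
    Matrix.mulVec_single_one, smul_eq_mul, Matrix.col_apply, hdiag]
  linear_combination (norm := module)
    hN • (A.mulVec v i • Pi.single i (1 : ℝ) - A.mulVec v j • Pi.single j (1 : ℝ))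

lemma word_braid_B2 (hdiag : ∀ k, A k k = 2) (hN : A i j * A j i = 2) :
    word A [i, j, i, j] = word A [j, i, j, i] := by
  funext v
  simp only [word_cons_apply, word_nil_apply, simpleRefl_apply]
  simp only [Matrix.mulVec_sub, Matrix.mulVec_smul, Pi.sub_apply, Pi.smul_apply,
    Matrix.mulVec_single_one, smul_eq_mul, Matrix.col_apply, hdiag]
  linear_combination (norm := module) hN • (A.mulVec v j * A i j) • Pi.single i (1 : ℝ) -
    hN • (A.mulVec v i * A j i) • Pi.single j (1 : ℝ)

lemma word_braid_G2 (hdiag : ∀ k, A k k = 2) (hN : A i j * A j i = 3) :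
    word A [i, j, i, j, i, j] = word A [j, i, j, i, j, i] := by
  funext v
  simp only [word_cons_apply, word_nil_apply, simpleRefl_apply]
  simp only [Matrix.mulVec_sub, Matrix.mulVec_smul, Pi.sub_apply, Pi.smul_apply,
    Matrix.mulVec_single_one, smul_eq_mul, Matrix.col_apply, hdiag]
  linear_combination (norm := module)
    hN • (A.mulVec v j * A i j * (A i j * A j i - 1)) • Pi.single i (1 : ℝ) -
      hN • (A.mulVec v i * A j i * (A i j * A j i - 1)) • Pi.single j (1 : ℝ)

lemma word_altWord_braidLength (hA : IsGCM A) {N : ℤ} (hN : A i j * A j i = N) (h0 : 0 ≤ N)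
    (h4 : N < 4) : word A (altWord i j (braidLength N)) = word A (altWord j i (braidLength N)) := by
  obtain ⟨hdiag, -, hzero⟩ := hA
  interval_cases N
  · have hij : A i j = 0 := by
      rcases mul_eq_zero.1 (by exact_mod_cast hN) with h | h
      exacts [h, hzero j i h]
    exact word_braid_A1A1 hij (hzero i j hij)
  · exact word_braid_A2 hdiag (by exact_mod_cast hN)
  · exact word_braid_B2 hdiag (by exact_mod_cast hN)
  · exact word_braid_G2 hdiag (by exact_mod_cast hN)

lemma eq_altWord_of_lengthAtLeast (hdiag : ∀ k, A k k = 2) {x : List (Fin n)} :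
    ∀ {i j : Fin n}, (∀ t ∈ x, t = i ∨ t = j) →
      LengthAtLeast A {i, j} x.length (word A x) →
      LengthAtLeast A {i, j} x.length (word A x * simpleRefl A i) →
      x = altWord i j x.length := by
  induction x using List.reverseRecOn with
  | nil => intros; rfl
  | append_singleton x t ih =>
    intro i j hx hred hup
    have hxij : ∀ s ∈ x, s = i ∨ s = j := fun s hs => hx s (by simp [hs])
    obtain rfl | rfl := hx t (by simp)
    · have := hup x (by simpa using hxij) (by simp [mul_assoc, simpleRefl_mul_self (hdiag t)])
      simp at this
    · rw [Set.pair_comm] at hred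
      have hx' := ih (fun s hs => (hxij s hs).symm) (hred.of_append_singleton (by simp))
        hred.mul_simpleRefl_of_append
      rw [List.length_append, List.length_singleton, altWord_succ, ← hx']

lemma lt_braidLength_of_lengthAtLeast (hA : IsGCM A) {N : ℤ} (hN : A i j * A j i = N)
    (h0 : 0 ≤ N) (h4 : N < 4) {m : ℕ}
    (hup : LengthAtLeast A {i, j} m (word A (altWord i j m) * simpleRefl A i)) :
    m < braidLength N := by
  -- otherwise the braid relation turns the last letter `j` into an `i`, which then cancels
  by_contra! hm
  obtain ⟨M, hM⟩ : ∃ M, braidLength N = M + 1 :=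
    ⟨_, (Nat.sub_add_cancel (one_le_braidLength _)).symm⟩
  have hbraid := word_altWord_braidLength hA hN h0 h4
  rw [hM] at hbraid hm
  obtain ⟨z, hz⟩ := exists_altWord_eq_append i j (m - (M + 1)) (M + 1)
  rw [Nat.sub_add_cancel hm] at hz
  have hletters : ∀ t ∈ z ++ altWord i j M, t ∈ ({i, j} : Set (Fin n)) := by
    intro t ht
    rcases List.mem_append.1 ht with h | h
    · exact mem_altWord (hz ▸ List.mem_append_left _ h)
    · exact mem_altWord h
  have hw : word A (z ++ altWord i j M) = word A (altWord i j m) * simpleRefl A i := by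
    rw [hz, word_append, word_append, hbraid, altWord_succ, word_append, word_singleton, mul_assoc,
      mul_assoc, simpleRefl_mul_self (hA.1 i), mul_one]
  have hlen := congrArg List.length hz
  have := hup _ hletters hw
  simp only [length_altWord, List.length_append] at hlen this
  omega

theorem exists_nonneg_coeffs_dihedral (hA : IsGCM A) (hij : i ≠ j) {x : List (Fin n)}
    (hx : ∀ t ∈ x, t = i ∨ t = j) (hred : LengthAtLeast A {i, j} x.length (word A x))
    (hup : LengthAtLeast A {i, j} x.length (word A x * simpleRefl A i)) :
    ∃ P Q : ℝ, 0 ≤ P ∧ 0 ≤ Q ∧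
      word A x (Pi.single i 1) = P • Pi.single i 1 + Q • Pi.single j 1 := by
  obtain ⟨m, rfl⟩ : ∃ m, x = altWord i j m := ⟨_, eq_altWord_of_lengthAtLeast hA.1 hx hred hup⟩
  rw [length_altWord] at hup
  obtain ⟨a, ha⟩ := (hA.2.1 i j hij).2
  obtain ⟨b, hb⟩ := (hA.2.1 j i hij.symm).2
  have hb0 : 0 ≤ -A j i := neg_nonneg.2 (hA.2.1 j i hij.symm).1
  have hN : A i j * A j i = (a * b : ℤ) := by push_cast [ha, hb]; ring
  have hN0 : 0 ≤ a * b := by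
    have := mul_nonneg_of_nonpos_of_nonpos (hA.2.1 i j hij).1 (hA.2.1 j i hij.symm).1
    rw [hN] at this
    exact_mod_cast this
  suffices hc : 0 ≤ (rank2Coeff (a * b) m).1 ∧ 0 ≤ (rank2Coeff (a * b) m).2 from
    ⟨_, _, by exact_mod_cast hc.1, mul_nonneg hb0 (by exact_mod_cast hc.2),
      word_altWord_apply_single hA.1 hN m⟩
  rcases le_or_gt 4 (a * b) with h4 | h4
  · exact rank2Coeff_nonneg_of_four_le h4 m
  exact rank2Coeff_nonneg_of_lt_braidLength hN0 h4
    (lt_braidLength_of_lengthAtLeast hA hN hN0 h4 hup)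

lemma exists_dihedral_factorization (hdiag : ∀ k, A k k = 2) (i j : Fin n) {l : List (Fin n)}
    (hred : LengthAtLeast A univ (l.length + 1) (word A (l ++ [j]))) :
    ∃ v x : List (Fin n), (∀ t ∈ x, t = i ∨ t = j) ∧ word A v * word A x = word A (l ++ [j]) ∧
      v.length + x.length = l.length + 1 ∧ v.length ≤ l.length ∧
      ∀ t, t = i ∨ t = j → LengthAtLeast A univ v.length (word A v * simpleRefl A t) := by
  classical
  have hex : ∃ m, ∃ v x : List (Fin n), v.length = m ∧ (∀ t ∈ x, t = i ∨ t = j) ∧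
      word A v * word A x = word A (l ++ [j]) ∧ m + x.length = l.length + 1 :=
    ⟨_, l, [j], rfl, by simp, by simp, by simp⟩
  obtain ⟨v, x, hv, hx, hvx, hlen⟩ := Nat.find_spec hex
  refine ⟨v, x, hx, hvx, hv ▸ hlen, ?_, fun t ht v' _ hv' => ?_⟩
  · exact hv ▸ Nat.find_min' hex ⟨l, [j], rfl, by simp, by simp, by simp⟩
  -- otherwise `v' ++ t :: x` would be a factorization with a shorter left part
  by_contra! hshort
  have hw : word A v' * word A (t :: x) = word A (l ++ [j]) := by
    rw [hv', word_cons, mul_assoc, ← mul_assoc (simpleRefl A t), simpleRefl_mul_self (hdiag t),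
      one_mul, hvx]
  have hge := hred (v' ++ t :: x) (fun _ _ => mem_univ _) (by rw [word_append, hw])
  simp only [List.length_append, List.length_cons] at hge
  exact Nat.find_min hex (hv ▸ hshort) ⟨v', t :: x, rfl,
    by simpa [or_imp, forall_and] using ⟨ht, hx⟩, hw, by simp only [List.length_cons]; omega⟩

theorem word_apply_single_nonneg (hA : IsGCM A) (l : List (Fin n)) (i : Fin n)
    (hred : LengthAtLeast A univ l.length (word A l))
    (hup : LengthAtLeast A univ l.length (word A l * simpleRefl A i)) :
    0 ≤ word A l (Pi.single i 1) := by
  induction hL : l.length using Nat.strong_induction_on generalizing l i with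
  | _ L ih =>
  rcases l.eq_nil_or_concat' with rfl | ⟨l, j, rfl⟩
  · simp [word_nil_apply]
  rw [List.length_append, List.length_singleton] at hred hup hL
  have hji : j ≠ i := by
    rintro rfl
    have := hup l (fun _ _ => mem_univ _) (by simp [mul_assoc, simpleRefl_mul_self (hA.1 j)])
    omega
  obtain ⟨v, x, hx, hvx, hlen, hvl, hvup⟩ := exists_dihedral_factorization hA.1 i j hred
  have hv : LengthAtLeast A univ v.length (word A v) := fun v' _ hv' => by
    have := hred (v' ++ x) (fun _ _ => mem_univ _) (by rw [word_append, hv', hvx])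
    rw [List.length_append] at this
    omega
  have hxred : LengthAtLeast A {i, j} x.length (word A x) := fun x' _ hx' => by
    have := hred (v ++ x') (fun _ _ => mem_univ _) (by rw [word_append, hx', hvx])
    rw [List.length_append] at this
    omega
  have hxup : LengthAtLeast A {i, j} x.length (word A x * simpleRefl A i) := fun x' _ hx' => by
    have := hup (v ++ x') (fun _ _ => mem_univ _) (by rw [word_append, hx', ← mul_assoc, hvx])
    rw [List.length_append] at this
    omega
  obtain ⟨P, Q, hP, hQ, hPQ⟩ := exists_nonneg_coeffs_dihedral hA hji.symm hx hxred hxup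
  have hvi := ih _ (by omega) v i hv (hvup i (.inl rfl)) rfl
  have hvj := ih _ (by omega) v j hv (hvup j (.inr rfl)) rfl
  calc 0 ≤ P • word A v (Pi.single i 1) + Q • word A v (Pi.single j 1) :=
        add_nonneg (smul_nonneg hP hvi) (smul_nonneg hQ hvj)
    _ = word A (l ++ [j]) (Pi.single i 1) := by
        rw [← hvx]
        change _ = word A v (word A x _)
        rw [hPQ, word_add, word_smul, word_smul]

theorem word_apply_sub_self_nonneg (hA : IsGCM A) {lam : Fin n → ℝ}
    (hlam : ∀ i, A.mulVec lam i ≤ 0) (l : List (Fin n))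
    (hl : LengthAtLeast A univ l.length (word A l)) : 0 ≤ word A l lam - lam := by
  induction l using List.reverseRecOn with
  | nil => simp [word_nil_apply]
  | append_singleton l m ih =>
    have hl' := hl.of_append_singleton (mem_univ m)
    have hsplit : word A (l ++ [m]) lam - lam =
        (word A l lam - lam) + (-A.mulVec lam m) • word A l (Pi.single m 1) := by
      rw [word_append, word_singleton]
      change word A l (simpleRefl A m lam) - lam = _
      rw [simpleRefl_apply, sub_eq_add_neg lam, ← neg_smul, word_add, word_smul]
      abel
    rw [hsplit]
    exact add_nonneg (ih hl') (smul_nonneg (neg_nonneg.2 (hlam m))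
      (word_apply_single_nonneg hA l m hl' hl.mul_simpleRefl_of_append))

end GCM

theorem weyl_orbit_ge
    {n : ℕ} (A : Matrix (Fin n) (Fin n) ℝ) (hA : IsGCM A)
    (lam : Fin n → ℝ) (hlam : ∀ i, A.mulVec lam i ≤ 0) :
    ∀ w ∈ weylGroup A, ∀ i, 0 ≤ (w lam - lam) i := by
  intro w hw
  obtain ⟨l, rfl, hl⟩ := GCM.exists_shortest_word (GCM.exists_word_eq hw)
  exact GCM.word_apply_sub_self_nonneg hA hlam l hl
end

section
/- Let L be a Lie algebra over ℂ and let σ : L → L be a Lie algebra automorphism with σ^r = id for some r ≥ 1. Let h ∈ L be an eigenvector of σ, and let j ≥ 1 be such that σ^j(h) = h. Assume there exist x ∈ L with x ≠ 0 and c ∈ ℂ with c ≠ 0 such that ⁅h, x⁆ = c • x. Then there exists a nonzero u ∈ L which is an eigenvector of σ and satisfies (ad h)^j (u) = c^j • u, where ad h denotes the adjoint endomorphism y ↦ ⁅h, y⁆ of L. -/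
theorem sigma_eigenvector_lemma
    {L : Type*} [LieRing L] [LieAlgebra ℂ L]
    (σ : L ≃ₗ⁅ℂ⁆ L) (r : ℕ) (hr : 1 ≤ r) (hσr : ∀ x : L, (⇑σ)^[r] x = x)
    (h : L) (hh0 : h ≠ 0) (μ : ℂ) (hhμ : σ h = μ • h)
    (j : ℕ) (hj : 1 ≤ j) (hhj : (⇑σ)^[j] h = h)
    (x : L) (hx0 : x ≠ 0) (c : ℂ) (hc0 : c ≠ 0) (hx : ⁅h, x⁆ = c • x) :
    ∃ u : L, u ≠ 0 ∧ (∃ ν : ℂ, σ u = ν • u) ∧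
      ((LieAlgebra.ad ℂ L h) ^ j) u = c ^ j • u := by
  classical
  have hr0 : r ≠ 0 := by omega
  have hsm : ∀ (a : ℂ) (y : L), σ (a • y) = a • σ y := fun a y =>
    σ.toLieHom.map_smul a y
  have hssum : ∀ (f : ℕ → L) (t : Finset ℕ),
      σ (∑ k ∈ t, f k) = ∑ k ∈ t, σ (f k) := fun f t =>
    map_sum σ.toLieHom.toLinearMap f t
  -- μ ^ j = 1
  have hμpow : ∀ k : ℕ, (⇑σ)^[k] h = μ ^ k • h := by
    intro k; induction k with
    | zero => simp
    | succ n ih =>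
      rw [Function.iterate_succ_apply', ih, hsm, hhμ, smul_smul, pow_succ]
  have hμj : μ ^ j = 1 := by
    have h1 := hμpow j
    rw [hhj] at h1
    have h2 : (μ ^ j - 1) • h = 0 := by rw [sub_smul, one_smul, ← h1, sub_self]
    rcases smul_eq_zero.mp h2 with h3 | h3
    · exact sub_eq_zero.mp h3
    · exact absurd h3 hh0
  have hμ0 : μ ≠ 0 := by
    intro h0
    rw [h0, zero_pow (by omega)] at hμj
    exact one_ne_zero hμj.symm
  -- eigenvalue of ad on iterates of x
  have hadk : ∀ k : ℕ, ⁅h, (⇑σ)^[k] x⁆ = (c * (μ⁻¹) ^ k) • (⇑σ)^[k] x := by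
    intro k; induction k with
    | zero => simpa using hx
    | succ n ih =>
      have h1 : ⁅σ h, σ ((⇑σ)^[n] x)⁆ = σ ⁅h, (⇑σ)^[n] x⁆ :=
        (σ.map_lie h ((⇑σ)^[n] x)).symm
      rw [ih, hsm, hhμ, smul_lie] at h1
      have h3 : ⁅h, σ ((⇑σ)^[n] x)⁆ =
          (μ⁻¹ * (c * μ⁻¹ ^ n)) • σ ((⇑σ)^[n] x) := by
        rw [mul_smul, ← h1, smul_smul, inv_mul_cancel₀ hμ0, one_smul]
      rw [Function.iterate_succ_apply', h3]
      ring_nf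
  -- powers of ad on eigenvectors
  have hadpow : ∀ (a : ℂ) (y : L), ⁅h, y⁆ = a • y →
      ∀ n : ℕ, ((LieAlgebra.ad ℂ L h) ^ n) y = a ^ n • y := by
    intro a y hy n
    induction n with
    | zero => simp
    | succ m ih =>
      rw [pow_succ', Module.End.mul_apply, ih, map_smul]
      simp only [LieAlgebra.ad_apply, hy, smul_smul, ← pow_succ]
  have hadj : ∀ k : ℕ, ((LieAlgebra.ad ℂ L h) ^ j) ((⇑σ)^[k] x)
      = c ^ j • (⇑σ)^[k] x := by
    intro k
    rw [hadpow _ _ (hadk k) j]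
    congr 1
    rw [mul_pow, ← pow_mul, Nat.mul_comm k j, pow_mul, inv_pow, hμj]
    simp
  -- primitive root
  set ζ : ℂ := Complex.exp (2 * Real.pi * Complex.I / r) with hζdef
  have hζ : IsPrimitiveRoot ζ r := Complex.isPrimitiveRoot_exp r hr0
  have hζr : ζ ^ r = 1 := hζ.pow_eq_one
  have hζ0 : ζ ≠ 0 := fun h0 => by simp [h0, zero_pow hr0] at hζr
  set u : ℕ → L := fun m => ∑ k ∈ Finset.range r, ((ζ ^ m)⁻¹) ^ k • (⇑σ)^[k] x
    with hudef
  -- each u m is eigenvector of (ad h)^j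
  have hu_ad : ∀ m, ((LieAlgebra.ad ℂ L h) ^ j) (u m) = c ^ j • u m := by
    intro m
    rw [hudef]
    simp only [map_sum, map_smul, hadj, Finset.smul_sum, smul_smul]
    exact Finset.sum_congr rfl fun k _ => by rw [mul_comm]
  -- each u m is eigenvector of σ
  have hu_σ : ∀ m, σ (u m) = ζ ^ m • u m := by
    intro m
    set ω : ℂ := (ζ ^ m)⁻¹ with hω
    have hωr : ω ^ r = 1 := by
      rw [hω, inv_pow, ← pow_mul, mul_comm, pow_mul, hζr, one_pow, inv_one]
    obtain ⟨s, hs⟩ : ∃ s, r = s + 1 := ⟨r - 1, by omega⟩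
    have lhs : σ (u m) = (∑ k ∈ Finset.range s, ω ^ k • (⇑σ)^[k + 1] x)
        + ω ^ s • x := by
      rw [hudef]
      simp only [hssum, hsm]
      rw [hs, Finset.sum_range_succ]
      congr 1
      · exact Finset.sum_congr rfl fun k _ => by
          rw [← Function.iterate_succ_apply' σ]
      · rw [← Function.iterate_succ_apply' σ, show s.succ = r by omega, hσr]
    have rhs : ζ ^ m • u m = (∑ k ∈ Finset.range s, ω ^ k • (⇑σ)^[k + 1] x)
        + ζ ^ m • x := by
      rw [hudef, Finset.smul_sum, hs, Finset.sum_range_succ']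
      congr 1
      · refine Finset.sum_congr rfl fun k _ => ?_
        rw [smul_smul, hω, pow_succ', ← mul_assoc,
          mul_inv_cancel₀ (pow_ne_zero _ hζ0), one_mul]
      · simp
    rw [lhs, rhs]
    congr 2
    -- ω ^ s = ζ ^ m
    have h1 : ω ^ s * ω = 1 := by rw [← pow_succ, ← hs, hωr]
    have h2 := eq_inv_of_mul_eq_one_left h1
    rw [h2, hω, inv_inv]
  -- sum of all u m equals r • x
  have hsum : ∑ m ∈ Finset.range r, u m = (r : ℂ) • x := by
    rw [hudef]
    rw [Finset.sum_comm]
    have key : ∀ k ∈ Finset.range r,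
        ∑ m ∈ Finset.range r, ((ζ ^ m)⁻¹) ^ k • (⇑σ)^[k] x
        = (if k = 0 then (r : ℂ) else 0) • (⇑σ)^[k] x := by
      intro k hk
      rw [← Finset.sum_smul]
      congr 1
      have hrw : ∀ m, ((ζ ^ m)⁻¹) ^ k = ((ζ ^ k)⁻¹) ^ m := by
        intro m
        rw [inv_pow, inv_pow, ← pow_mul, ← pow_mul, mul_comm]
      simp only [hrw]
      by_cases hk0 : k = 0
      · simp [hk0]
      · rw [if_neg hk0]
        have hne1 : (ζ ^ k)⁻¹ ≠ 1 := by
          intro h1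
          exact hζ.pow_ne_one_of_pos_of_lt (by omega) (Finset.mem_range.mp hk)
            (inv_eq_one.mp h1)
        have hpr : ((ζ ^ k)⁻¹) ^ r = 1 := by
          rw [inv_pow, ← pow_mul, mul_comm, pow_mul, hζr, one_pow, inv_one]
        rw [geom_sum_eq hne1 r, hpr, sub_self, zero_div]
    rw [Finset.sum_congr rfl key]
    rw [Finset.sum_eq_single_of_mem 0 (Finset.mem_range.mpr (by omega : 0 < r))
      (fun k _ hk0 => by simp [hk0])]
    simp
  -- existence of nonzero u m
  have hex : ∃ m ∈ Finset.range r, u m ≠ 0 := by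
    by_contra hcon
    push_neg at hcon
    have h1 : ∑ m ∈ Finset.range r, u m = 0 := Finset.sum_eq_zero hcon
    rw [hsum] at h1
    rcases smul_eq_zero.mp h1 with h2 | h2
    · exact hr0 (Nat.cast_eq_zero.mp h2)
    · exact hx0 h2
  obtain ⟨m, _, hm⟩ := hex
  exact ⟨u m, hm, ⟨ζ ^ m, hu_σ m⟩, hu_ad m⟩
end

section
/- Let R = ℂ[t, t⁻¹] be the ring of Laurent polynomials over ℂ, and let W = Der_ℂ(R) be the Lie algebra of ℂ-linear derivations of R with the commutator bracket (the Witt algebra). Let D ∈ W and assume that ad D acts locally finitely on W, i.e. for every E ∈ W the ℂ-linear span of {(ad D)^k (E) : k ∈ ℕ} is finite-dimensional. Then D = c • ∂₀ for some c ∈ ℂ, where ∂₀ is the Euler derivation t·d/dt, i.e. the unique ℂ-linear derivation of R with ∂₀(t) = t. -/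
/-!
Write `E` for the Euler derivation. Every derivation of `R[T;T⁻¹]` is determined by its value at
`T 1`, so `D = g • E` with `g = T⁻¹ · D(T)`, and `⁅g • E, h • E⁆ = (g E h - E g · h) • E`.
If `g` had a nonzero coefficient at some `m ≠ 0`, let `M` be its extreme exponent on the side of
`m`. Starting from `h = T^(M + sign m)`, each application of `ad D` moves the extreme exponent
of `h` a further `M` in that direction with a nonzero extreme coefficient, so the iterates have
pairwise distinct extreme exponents and are linearly independent, contradicting local finiteness.
Hence `g` is a constant.
-/

open LaurentPolynomial

theorem linearIndependent_of_triangular {ι R M : Type*} [LinearOrder ι] [Ring R]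
    [NoZeroDivisors R] [AddCommGroup M] [Module R M] {v : ι → M} (f : ι → M →ₗ[R] R)
    (hdiag : ∀ i, f i (v i) ≠ 0) (hlower : ∀ i j, i < j → f j (v i) = 0) :
    LinearIndependent R v := by
  classical
  rw [linearIndependent_iff']
  intro s c
  induction s using Finset.induction_on_max with
  | empty => simp
  | insert a s hlt ih =>
    intro hsum
    rw [Finset.sum_insert fun ha => (hlt a ha).false] at hsum
    have hca : c a = 0 := by
      have hfa := congrArg (f a) hsum
      rw [map_add, map_sum, Finset.sum_eq_zero fun i hi => by rw [map_smul, hlower i a (hlt i hi),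
        smul_zero], add_zero, map_smul, smul_eq_mul, map_zero] at hfa
      exact (mul_eq_zero.mp hfa).resolve_right (hdiag a)
    rw [hca, zero_smul, zero_add] at hsum
    intro i hi
    rcases Finset.mem_insert.mp hi with rfl | hi
    exacts [hca, ih hsum i hi]

namespace Derivation

section Wronskian

variable {R A : Type*} [CommRing R] [CommRing A] [Algebra R A]

def wronskian (E : Derivation R A A) (g h : A) : A :=
  g * E h - E g * h

theorem lie_smul_smul (E : Derivation R A A) (g h : A) :
    ⁅g • E, h • E⁆ = E.wronskian g h • E := by
  ext f
  simp only [commutator_apply, smul_apply, leibniz, wronskian, smul_eq_mul]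
  ring

theorem iterate_lie_smul (E : Derivation R A A) (g h : A) (k : ℕ) :
    (fun F => ⁅g • E, F⁆)^[k] (h • E) = (E.wronskian g)^[k] h • E := by
  induction k with
  | zero => rfl
  | succ k ih => rw [Function.iterate_succ_apply', Function.iterate_succ_apply', ih, lie_smul_smul]

end Wronskian

section LaurentPolynomial

variable {R : Type*} [CommRing R]

/-- The logarithmic derivative `n ↦ T(-n) · D(T n)` is additive, hence `ℤ`-linear in `n`. -/
theorem T_neg_mul_apply_T (D : Derivation R R[T;T⁻¹] R[T;T⁻¹]) (n : ℤ) :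
    T (-n) * D (T n) = n • (T (-1) * D (T 1)) := by
  have hinv (a : ℤ) : (T (-a) : R[T;T⁻¹]) * T a = 1 := by rw [← T_add, neg_add_cancel, T_zero]
  let logDeriv : ℤ →+ R[T;T⁻¹] := AddMonoidHom.mk' (fun n => T (-n) * D (T n)) fun a b => by
    rw [T_add, D.leibniz, neg_add, T_add, smul_eq_mul, smul_eq_mul]
    linear_combination (T (-b) * D (T b)) * hinv a + (T (-a) * D (T a)) * hinv b
  exact AddMonoidHom.apply_int _ logDeriv n

theorem ext_T_one {D₁ D₂ : Derivation R R[T;T⁻¹] R[T;T⁻¹]} (h : D₁ (T 1) = D₂ (T 1)) :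
    D₁ = D₂ := by
  have hT (n : ℤ) : D₁ (T n) = D₂ (T n) := by
    apply (isUnit_T (-n)).mul_left_cancel
    rw [D₁.T_neg_mul_apply_T, D₂.T_neg_mul_apply_T, h]
  refine Derivation.ext fun f => ?_
  induction f using LaurentPolynomial.induction_on' with
  | add p q hp hq => rw [map_add, map_add, hp, hq]
  | C_mul_T n a => rw [← smul_eq_C_mul, D₁.map_smul, D₂.map_smul, hT]

end LaurentPolynomial

end Derivation

namespace LaurentPolynomial

section DegreeLEAlong

variable {R : Type*}

/-- For `ε = 1` this says `deg x ≤ a`, for `ε = -1` that the order of `x` is at least `a`. -/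
def DegreeLEAlong [Semiring R] (ε : ℤ) (x : R[T;T⁻¹]) (a : ℤ) : Prop :=
  ∀ p ∈ x.coeff.support, ε * p ≤ ε * a

variable {ε a b : ℤ}

section Semiring

variable [Semiring R] {x y : R[T;T⁻¹]}

theorem DegreeLEAlong.coeff_eq_zero (hx : DegreeLEAlong ε x a) {p : ℤ} (hp : ε * a < ε * p) :
    x.coeff p = 0 :=
  Finsupp.notMem_support_iff.mp fun hmem => (hx p hmem).not_gt hp

theorem DegreeLEAlong.mono_support (hx : DegreeLEAlong ε x a)
    (hyx : y.coeff.support ⊆ x.coeff.support) : DegreeLEAlong ε y a :=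
  fun p hp => hx p (hyx hp)

theorem degreeLEAlong_T (ε n : ℤ) : DegreeLEAlong ε (T n : R[T;T⁻¹]) n := by
  intro p hp
  rw [Finsupp.mem_support_iff, T_apply] at hp
  split_ifs at hp with h
  · rw [h]
  · exact absurd rfl hp

theorem DegreeLEAlong.mul (hx : DegreeLEAlong ε x a) (hy : DegreeLEAlong ε y b) :
    DegreeLEAlong ε (x * y) (a + b) := by
  classical
  intro p hp
  obtain ⟨q, hq, r, hr, rfl⟩ :=
    Finset.mem_add.mp (AddMonoidAlgebra.support_coeff_mul_subset x y hp)
  linarith [hx q hq, hy r hr, mul_add ε q r, mul_add ε a b]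

theorem DegreeLEAlong.coeff_mul (hε : ε ≠ 0) (hx : DegreeLEAlong ε x a)
    (hy : DegreeLEAlong ε y b) : (x * y).coeff (a + b) = x.coeff a * y.coeff b := by
  refine AddMonoidAlgebra.coeff_mul_add_of_uniqueAdd fun q r hq hr hqr => ?_
  have hεq : ε * q = ε * a := by
    linarith [hx q hq, hy r hr, congrArg (ε * ·) hqr, mul_add ε q r, mul_add ε a b]
  have hqa := mul_left_cancel₀ hε hεq
  exact ⟨hqa, by omega⟩

end Semiring

theorem DegreeLEAlong.sub [Ring R] {x y : R[T;T⁻¹]} (hx : DegreeLEAlong ε x a)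
    (hy : DegreeLEAlong ε y a) : DegreeLEAlong ε (x - y) a := by
  classical
  intro p hp
  rw [AddMonoidAlgebra.coeff_sub] at hp
  rcases Finset.mem_union.mp (Finsupp.support_sub hp) with h | h
  exacts [hx p h, hy p h]

theorem exists_degreeLEAlong_of_coeff_ne_zero [Semiring R] {g : R[T;T⁻¹]} {m : ℤ} (hm : m ≠ 0)
    (hgm : g.coeff m ≠ 0) : ∃ ε M : ℤ, 0 < ε * M ∧ g.coeff M ≠ 0 ∧ DegreeLEAlong ε g M := by
  have hmem : m ∈ g.coeff.support := Finsupp.mem_support_iff.mpr hgm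
  obtain ⟨M, hM, hmax⟩ := g.coeff.support.exists_max_image (m.sign * ·) ⟨m, hmem⟩
  refine ⟨m.sign, M, ?_, Finsupp.mem_support_iff.mp hM, hmax⟩
  calc 0 < |m| := abs_pos.mpr hm
    _ = m.sign * m := (Int.sign_mul_self_eq_abs m).symm
    _ ≤ m.sign * M := hmax m hmem

end DegreeLEAlong

theorem eq_C_of_coeff_eq_zero {R : Type*} [Semiring R] {g : R[T;T⁻¹]}
    (h : ∀ m ≠ 0, g.coeff m = 0) : g = C (g.coeff 0) := by
  refine LaurentPolynomial.ext fun m => ?_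
  rw [C_apply]
  split_ifs with hm
  · rw [hm]
  · exact h m hm

section Euler

variable {R : Type*} [CommRing R] {E : Derivation R R[T;T⁻¹] R[T;T⁻¹]} (hE : E (T 1) = T 1)
include hE

theorem euler_apply_T (n : ℤ) : E (T n) = n • T n := by
  have h := E.T_neg_mul_apply_T n
  rw [hE, ← T_add, neg_add_cancel, T_zero] at h
  rw [← one_mul (E (T n)), ← T_zero, ← add_neg_cancel n, T_add, mul_assoc, h, mul_smul_comm,
    mul_one]

theorem coeff_euler (f : R[T;T⁻¹]) (m : ℤ) : (E f).coeff m = m * f.coeff m := by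
  induction f using LaurentPolynomial.induction_on' with
  | add p q hp hq =>
    simp only [map_add, AddMonoidAlgebra.coeff_add, Finsupp.add_apply, hp, hq, mul_add]
  | C_mul_T n a =>
    rw [← smul_eq_C_mul, E.map_smul, euler_apply_T hE]
    simp only [AddMonoidAlgebra.coeff_smul, Finsupp.smul_apply, T_apply]
    split_ifs with h <;> simp [h, mul_comm]

theorem eq_smul_euler (D : Derivation R R[T;T⁻¹] R[T;T⁻¹]) : D = (T (-1) * D (T 1)) • E :=
  Derivation.ext_T_one <| by
    rw [Derivation.smul_apply, hE, smul_eq_mul, mul_right_comm, ← T_add, neg_add_cancel, T_zero,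
      one_mul]

theorem smul_euler_injective : Function.Injective fun x : R[T;T⁻¹] => x • E := fun x y hxy => by
  have h := congrArg (fun F : Derivation R R[T;T⁻¹] R[T;T⁻¹] => F (T 1)) hxy
  simp only [Derivation.smul_apply, hE, smul_eq_mul] at h
  exact (isUnit_T 1).mul_left_inj.mp h

variable {ε M a : ℤ} {g x : R[T;T⁻¹]}

theorem DegreeLEAlong.euler (hx : DegreeLEAlong ε x a) : DegreeLEAlong ε (E x) a :=
  hx.mono_support fun p hp => by
    rw [Finsupp.mem_support_iff, coeff_euler hE] at hp
    exact Finsupp.mem_support_iff.mpr (right_ne_zero_of_mul hp)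

theorem DegreeLEAlong.wronskian (hg : DegreeLEAlong ε g M) (hx : DegreeLEAlong ε x a) :
    DegreeLEAlong ε (E.wronskian g x) (M + a) :=
  (hg.mul (hx.euler hE)).sub ((hg.euler hE).mul hx)

theorem coeff_wronskian (hε : ε ≠ 0) (hg : DegreeLEAlong ε g M) (hx : DegreeLEAlong ε x a) :
    (E.wronskian g x).coeff (M + a) = ((a - M : ℤ) : R) * g.coeff M * x.coeff a := by
  rw [Derivation.wronskian, AddMonoidAlgebra.coeff_sub, Finsupp.sub_apply,
    hg.coeff_mul hε (hx.euler hE), (hg.euler hE).coeff_mul hε hx, coeff_euler hE, coeff_euler hE]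
  push_cast
  ring

variable [IsDomain R] [CharZero R]

/-- The factor `a - M` of `coeff_wronskian` never vanishes along the iteration, because the
extreme exponent `(k + 1) * M + ε` stays strictly beyond `M` in the direction `ε`. -/
theorem iterate_wronskian_T_leading (hεM : 0 < ε * M) (hgM : g.coeff M ≠ 0)
    (hg : DegreeLEAlong ε g M) (k : ℕ) :
    DegreeLEAlong ε ((E.wronskian g)^[k] (T (M + ε))) ((k + 1) * M + ε) ∧
      ((E.wronskian g)^[k] (T (M + ε))).coeff ((k + 1) * M + ε) ≠ 0 := by
  have hε : ε ≠ 0 := by rintro rfl; simp at hεM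
  induction k with
  | zero =>
    rw [Function.iterate_zero_apply, Nat.cast_zero, zero_add, one_mul]
    exact ⟨degreeLEAlong_T ε (M + ε), by simp [T_apply]⟩
  | succ k ih =>
    obtain ⟨hx, hxc⟩ := ih
    have hidx : ((k + 1 : ℕ) + 1 : ℤ) * M + ε = M + ((k + 1) * M + ε) := by push_cast; ring
    rw [Function.iterate_succ_apply', hidx]
    refine ⟨hg.wronskian hE hx, ?_⟩
    rw [coeff_wronskian hE hε hg hx]
    refine mul_ne_zero (mul_ne_zero (Int.cast_ne_zero.mpr fun h => ?_) hgM) hxc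
    have h' : ε * ((k + 1) * M + ε - M) = k * (ε * M) + ε * ε := by ring
    rw [h, mul_zero] at h'
    nlinarith [mul_self_pos.mpr hε, mul_nonneg (Nat.cast_nonneg (α := ℤ) k) hεM.le]

theorem linearIndependent_iterate_wronskian_T (hεM : 0 < ε * M) (hgM : g.coeff M ≠ 0)
    (hg : DegreeLEAlong ε g M) :
    LinearIndependent R fun k : ℕ => (E.wronskian g)^[k] (T (M + ε)) := by
  refine linearIndependent_of_triangular
    (fun k : ℕ => Finsupp.lapply ((k + 1) * M + ε) ∘ₗ
      (AddMonoidAlgebra.coeffLinearEquiv R).toLinearMap)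
    (fun k => (iterate_wronskian_T_leading hE hεM hgM hg k).2) fun j k hjk => ?_
  refine (iterate_wronskian_T_leading hE hεM hgM hg j).1.coeff_eq_zero ?_
  have : (j : ℤ) < k := by exact_mod_cast hjk
  nlinarith

end Euler

theorem not_finiteDimensional_span_iterate_lie {K : Type*} [Field K] [CharZero K]
    {E : Derivation K K[T;T⁻¹] K[T;T⁻¹]} (hE : E (T 1) = T 1) {ε M : ℤ} {g : K[T;T⁻¹]}
    (hεM : 0 < ε * M) (hgM : g.coeff M ≠ 0) (hg : DegreeLEAlong ε g M) :
    ¬ FiniteDimensional K (Submodule.span K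
      (Set.range fun k : ℕ => (fun F => ⁅g • E, F⁆)^[k] ((T (M + ε) : K[T;T⁻¹]) • E))) := by
  intro _
  have hli : LinearIndependent K
      fun k : ℕ => (fun F => ⁅g • E, F⁆)^[k] ((T (M + ε) : K[T;T⁻¹]) • E) := by
    simp_rw [Derivation.iterate_lie_smul]
    exact (linearIndependent_iterate_wronskian_T hE hεM hgM hg).map'
      ((LinearMap.toSpanSingleton K[T;T⁻¹] _ E).restrictScalars K)
      (LinearMap.ker_eq_bot.mpr (smul_euler_injective hE))
  have : Finite ℕ := (linearIndependent_span hli).finite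
  exact not_finite ℕ

end LaurentPolynomial

theorem witt_locally_finite_is_euler
    (D : Derivation ℂ (LaurentPolynomial ℂ) (LaurentPolynomial ℂ))
    (hD : ∀ E : Derivation ℂ (LaurentPolynomial ℂ) (LaurentPolynomial ℂ),
      FiniteDimensional ℂ
        (Submodule.span ℂ (Set.range fun k : ℕ => (fun F => ⁅D, F⁆)^[k] E))) :
    ∀ euler : Derivation ℂ (LaurentPolynomial ℂ) (LaurentPolynomial ℂ),
      euler (T 1) = T 1 → ∃ c : ℂ, D = c • euler := by
  intro euler heuler
  obtain ⟨g, rfl⟩ : ∃ g : ℂ[T;T⁻¹], D = g • euler := ⟨_, eq_smul_euler heuler D⟩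
  have hconst : ∀ m ≠ 0, g.coeff m = 0 := by
    intro m hm
    by_contra hgm
    obtain ⟨ε, M, hεM, hgM, hg⟩ := exists_degreeLEAlong_of_coeff_ne_zero hm hgm
    exact not_finiteDimensional_span_iterate_lie heuler hεM hgM hg (hD _)
  refine ⟨g.coeff 0, ?_⟩
  conv_lhs => rw [eq_C_of_coeff_eq_zero hconst, C_eq_algebraMap, algebraMap_smul]
end

section
/- Let L be a Lie algebra over ℂ and σ : L → L a Lie algebra automorphism of finite order (σ^m = id for some m ≥ 1). Let B : L × L → ℂ be a bilinear form which is invariant (B(⁅x, y⁆, z) = B(x, ⁅y, z⁆) for all x, y, z ∈ L) and σ-invariant (B(σ(x), σ(y)) = B(x, y) for all x, y ∈ L). Let z ⊆ L be a σ-stable Lie subalgebra such that the restriction of B to z is nondegenerate, and such that z⁰ := {x ∈ z : σ(x) = x} satisfies ⁅z, z⁰⁆ = 0. Then for any x, y ∈ z which are eigenvectors of σ with eigenvalues μ, ν satisfying μ·ν = 1, one has ⁅x, y⁆ = 0. -/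
theorem eigenvectors_bracket_zero
    {L : Type*} [LieRing L] [LieAlgebra ℂ L]
    (σ : L ≃ₗ⁅ℂ⁆ L) (m : ℕ) (hm : 1 ≤ m) (hσm : ∀ x : L, (⇑σ)^[m] x = x)
    (B : L →ₗ[ℂ] L →ₗ[ℂ] ℂ)
    (hBinv : ∀ x y z : L, B ⁅x, y⁆ z = B x ⁅y, z⁆)
    (hBσ : ∀ x y : L, B (σ x) (σ y) = B x y)
    (z : LieSubalgebra ℂ L)
    (hzσ : ∀ x ∈ z, σ x ∈ z)
    (hBnd : ∀ x ∈ z, (∀ y ∈ z, B x y = 0) → x = 0)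
    (hz0 : ∀ x ∈ z, ∀ y ∈ z, σ y = y → ⁅x, y⁆ = 0) :
    ∀ x ∈ z, ∀ y ∈ z, ∀ μ ν : ℂ,
      x ≠ 0 → y ≠ 0 → σ x = μ • x → σ y = ν • y → μ * ν = 1 →
      ⁅x, y⁆ = 0 := by
  intro x hx y hy μ ν hx0 hy0 hσx hσy hμν
  set c : L := ⁅x, y⁆ with hc
  have hcz : c ∈ z := z.lie_mem hx hy
  have hσc : σ c = c := by
    have : σ c = ⁅σ x, σ y⁆ := LieHom.map_lie σ.toLieHom x y
    rw [this, hσx, hσy, smul_lie, lie_smul, smul_smul, hμν, one_smul]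
  apply hBnd c hcz
  intro w hw
  -- iterates of σ stay in z and preserve B c ·
  have hiter : ∀ k : ℕ, (⇑σ)^[k] w ∈ z ∧ B c ((⇑σ)^[k] w) = B c w := by
    intro k
    induction k with
    | zero => exact ⟨hw, rfl⟩
    | succ k ih =>
      rw [Function.iterate_succ_apply']
      refine ⟨hzσ _ ih.1, ?_⟩
      calc B c (σ ((⇑σ)^[k] w)) = B (σ c) (σ ((⇑σ)^[k] w)) := by rw [hσc]
        _ = B c ((⇑σ)^[k] w) := hBσ _ _
        _ = B c w := ih.2
  set P : L := (m : ℂ)⁻¹ • ∑ k ∈ Finset.range m, (⇑σ)^[k] w with hP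
  have hm0 : (m : ℂ) ≠ 0 := Nat.cast_ne_zero.mpr (by omega)
  have hPz : P ∈ z := by
    refine z.smul_mem _ (z.toSubmodule.sum_mem ?_)
    intro k _; exact (hiter k).1
  have hσP : σ P = P := by
    show σ.toLinearEquiv P = P
    rw [hP, map_smul, map_sum]
    congr 1
    have h1 : ∀ k, σ.toLinearEquiv ((⇑σ)^[k] w) = (⇑σ)^[k+1] w := by
      intro k; rw [Function.iterate_succ_apply']; rfl
    rw [Finset.sum_congr rfl (fun k _ => h1 k)]
    have := Finset.sum_range_succ' (fun k => (⇑σ)^[k] w) m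
    have h2 := Finset.sum_range_succ (fun k => (⇑σ)^[k] w) m
    have h3 : (⇑σ)^[m] w = (⇑σ)^[0] w := by simp [hσm w]
    -- ∑_{k<m} f(k+1) = ∑_{k<m+1} f k - f 0 = ∑_{k<m} f k + f m - f 0
    have : (∑ k ∈ Finset.range m, (⇑σ)^[k+1] w) + (⇑σ)^[0] w
        = (∑ k ∈ Finset.range m, (⇑σ)^[k] w) + (⇑σ)^[m] w := by
      rw [← h2, this]
    rw [h3] at this
    exact add_right_cancel this
  have hBcP : B c P = B c w := by
    rw [hP, map_smul]
    rw [map_sum]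
    have : ∀ k ∈ Finset.range m, B c ((⇑σ)^[k] w) = B c w := fun k _ => (hiter k).2
    rw [Finset.sum_congr rfl this, Finset.sum_const, Finset.card_range, nsmul_eq_mul,
      smul_eq_mul, ← mul_assoc, inv_mul_cancel₀ hm0, one_mul]
  have hyP : ⁅y, P⁆ = 0 := hz0 y hy P hPz hσP
  have : B c P = 0 := by rw [hc, hBinv, hyP, map_zero]
  rw [← hBcP, this]
end
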